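/- arXiv:2305.00966 — 4 statements merged into one kernel-verified Lean document; each statement's English description precedes it below -/
import Mathlib

section
/- Let μ ∈ ℝ^d, let Σ be a d×d positive semidefinite matrix, let ε ∈ (0,1), and let A be a finite nonempty set of points in ℝ^d satisfying conditions (L.1)–(L.2) with respect to (μ, Σ, ε). Then for every symmetric d×d matrix P and every subset A' ⊆ A with |A'| ≥ (1−ε)|A|: (i) ‖P·((1/|A'|)·Σ_{x∈A'} x − μ)‖₂ ≤ 0.1·√(‖P Σ P‖_op), and (ii) ‖P·((1/|A'|)·Σ_{x∈A'} (x−μ)(x−μ)ᵀ − Σ)·P‖_F ≤ 0.1·‖P Σ P‖_op. -/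
open Matrix MeasureTheory ProbabilityTheory

noncomputable section

namespace ListDecCov

/-- Frobenius norm of a square real matrix. -/
def frobNorm {d : ℕ} (M : Matrix (Fin d) (Fin d) ℝ) : ℝ :=
  Real.sqrt (∑ i, ∑ j, (M i j) ^ 2)

/-- Operator (spectral) norm of a square real matrix. -/
def opNorm {d : ℕ} (M : Matrix (Fin d) (Fin d) ℝ) : ℝ :=
  ‖Matrix.toEuclideanCLM (𝕜 := ℝ) M‖

/-- Euclidean (ℓ²) norm of a vector. -/
def vecNorm {d : ℕ} (v : Fin d → ℝ) : ℝ :=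
  Real.sqrt (∑ i, (v i) ^ 2)

/-- The four Penrose equations characterizing the Moore–Penrose pseudoinverse. -/
def IsMoorePenrose {d : ℕ} (H Hd : Matrix (Fin d) (Fin d) ℝ) : Prop :=
  H * Hd * H = H ∧ Hd * H * Hd = Hd ∧ (H * Hd)ᵀ = H * Hd ∧ (Hd * H)ᵀ = Hd * H

/-- Average of `f` over a finite set. -/
def fAvg {X V : Type*} [AddCommMonoid V] [Module ℝ V] (A : Finset X) (f : X → V) : V :=
  (A.card : ℝ)⁻¹ • ∑ x ∈ A, f x

/-- Average of `f` over a multiset. -/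
def msAvg {X V : Type*} [AddCommMonoid V] [Module ℝ V] (T : Multiset X) (f : X → V) : V :=
  (T.card : ℝ)⁻¹ • (T.map f).sum

/-- Empirical covariance matrix of `f x`, `x` ranging over a finite set. -/
def fCov {X : Type*} {d : ℕ} (A : Finset X) (f : X → (Fin d → ℝ)) :
    Matrix (Fin d) (Fin d) ℝ :=
  fAvg A (fun x => Matrix.vecMulVec (f x) (f x)) - Matrix.vecMulVec (fAvg A f) (fAvg A f)

/-- Empirical covariance matrix of `f x`, `x` ranging over a multiset. -/
def msCov {X : Type*} {d : ℕ} (T : Multiset X) (f : X → (Fin d → ℝ)) :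
    Matrix (Fin d) (Fin d) ℝ :=
  msAvg T (fun x => Matrix.vecMulVec (f x) (f x)) - Matrix.vecMulVec (msAvg T f) (msAvg T f)

/-- Empirical variance of `g x`, `x` ranging over a finite set. -/
def fVar {X : Type*} (A : Finset X) (g : X → ℝ) : ℝ :=
  fAvg A fun x => (g x - fAvg A g) ^ 2

/-- Empirical variance of `g x`, `x` ranging over a multiset. -/
def msVar {X : Type*} (T : Multiset X) (g : X → ℝ) : ℝ :=
  msAvg T fun x => (g x - msAvg T g) ^ 2

/-- The `k`-th smallest element (1-indexed) of a multiset of reals. -/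
def kthSmallest (s : Multiset ℝ) (k : ℕ) : ℝ :=
  (s.sort (· ≤ ·)).getD (k - 1) 0

/-- Median (the `⌈m/2⌉`-th smallest element) of a multiset of reals of size `m`. -/
def msMedian (s : Multiset ℝ) : ℝ :=
  kthSmallest s ((Multiset.card s + 1) / 2)

/-- Conditions (L.1)–(L.2) of stability, with respect to mean `μ`, covariance `Sig`
(with psd square root `sqrtSig`) and parameter `ε`. -/
def SatisfiesL12 {d : ℕ} (μ : Fin d → ℝ) (Sig sqrtSig : Matrix (Fin d) (Fin d) ℝ) (ε : ℝ)
    (A : Finset (Fin d → ℝ)) : Prop :=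
  ∀ A' ⊆ A, (1 - ε) * (A.card : ℝ) ≤ (A'.card : ℝ) →
    (∀ v : Fin d → ℝ,
        |fAvg A' (fun x => v ⬝ᵥ (x - μ))| ≤ 0.1 * Real.sqrt (v ⬝ᵥ Sig.mulVec v)) ∧
    (∀ U : Matrix (Fin d) (Fin d) ℝ, U.IsSymm →
        |Matrix.trace ((fAvg A' (fun x => Matrix.vecMulVec (x - μ) (x - μ)) - Sig) * U)|
          ≤ 0.1 * frobNorm (sqrtSig * U * sqrtSig))

/-- The positive semidefinite square root of a positive semidefinite matrix
(the definition of `Matrix.PosSemidef.sqrt` in the older Mathlib, since removed). -/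
def psdSqrt {d : ℕ} {Sig : Matrix (Fin d) (Fin d) ℝ} (hA : Sig.PosSemidef) :
    Matrix (Fin d) (Fin d) ℝ :=
  (hA.1.eigenvectorUnitary : Matrix (Fin d) (Fin d) ℝ) *
    Matrix.diagonal ((↑) ∘ Real.sqrt ∘ hA.1.eigenvalues) *
    (star hA.1.eigenvectorUnitary : Matrix (Fin d) (Fin d) ℝ)

end ListDecCov

/-! Both bounds come from testing the stability conditions against one well-chosen direction.
For the mean, with `y = P (μ̂ - μ)`, apply (L.1) to `v = P y`: then `v ⬝ (μ̂ - μ) = ‖y‖²` and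
`vᵀ Σ v = yᵀ (P Σ P) y ≤ ‖P Σ P‖ ‖y‖²`, so `‖y‖² ≤ 0.1 √‖P Σ P‖ ‖y‖`.
For the covariance, with `N = P (Σ̂ - Σ) P`, apply (L.2) to `U = P N P`: then
`tr ((Σ̂ - Σ) U) = ‖N‖_F²`, and `Σ^{1/2} U Σ^{1/2} = B N Bᵀ` with `B = Σ^{1/2} P`, whose Frobenius
norm is at most `‖Bᵀ B‖ ‖N‖_F = ‖P Σ P‖ ‖N‖_F`. In both cases `x² ≤ c x` gives `x ≤ c`. -/

namespace ListDecCov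

open scoped RealInnerProductSpace Matrix.Norms.L2Operator

lemma le_of_sq_le_mul {x c : ℝ} (hc : 0 ≤ c) (h : x ^ 2 ≤ c * x) : x ≤ c := by
  nlinarith

section Symmetric

variable {n : Type*} [Fintype n]

lemma isSymm_mul_mul {P N : Matrix n n ℝ} (hN : N.IsSymm) (hP : P.IsSymm) :
    (P * N * P).IsSymm := by
  rw [IsSymm, transpose_mul, transpose_mul, hP.eq, hN.eq, Matrix.mul_assoc]

lemma dotProduct_mulVec_comm_of_isSymm {P : Matrix n n ℝ} (hP : P.IsSymm) (u w : n → ℝ) :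
    P *ᵥ u ⬝ᵥ w = u ⬝ᵥ P *ᵥ w := by
  rw [dotProduct_mulVec, ← vecMul_transpose, hP.eq]

end Symmetric

section Averages

variable {X : Type*}

lemma fAvg_sub_const {V : Type*} [AddCommGroup V] [Module ℝ V] {A : Finset X}
    (hA : A.Nonempty) (f : X → V) (c : V) :
    fAvg A (fun x => f x - c) = fAvg A f - c := by
  have hcard : (A.card : ℝ) ≠ 0 := by exact_mod_cast hA.card_ne_zero
  rw [fAvg, fAvg, Finset.sum_sub_distrib, smul_sub, Finset.sum_const, ← Nat.cast_smul_eq_nsmul ℝ,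
    smul_smul, inv_mul_cancel₀ hcard, one_smul]

lemma dotProduct_fAvg {n : Type*} [Fintype n] (v : n → ℝ) (A : Finset X) (f : X → n → ℝ) :
    v ⬝ᵥ fAvg A f = fAvg A (fun x => v ⬝ᵥ f x) := by
  rw [fAvg, fAvg, dotProduct_smul, dotProduct_sum, smul_eq_mul]

lemma isSymm_fAvg {n : Type*} (A : Finset X) (g : X → Matrix n n ℝ) (hg : ∀ x, (g x).IsSymm) :
    (fAvg A g).IsSymm := by
  rw [fAvg, IsSymm, transpose_smul, transpose_sum]
  simp_rw [fun x => (hg x).eq]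

end Averages

variable {d : ℕ}

lemma isSymm_psdSqrt {Sig : Matrix (Fin d) (Fin d) ℝ} (hSig : Sig.PosSemidef) :
    (psdSqrt hSig).IsSymm := by
  rw [IsSymm, ← conjTranspose_eq_transpose_of_trivial, psdSqrt, conjTranspose_mul,
    conjTranspose_mul, diagonal_conjTranspose, ← star_eq_conjTranspose, ← star_eq_conjTranspose,
    star_star]
  simp [Matrix.mul_assoc]

lemma psdSqrt_mul_self {Sig : Matrix (Fin d) (Fin d) ℝ} (hSig : Sig.PosSemidef) :
    psdSqrt hSig * psdSqrt hSig = Sig := by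
  conv_rhs => rw [hSig.1.spectral_theorem, Unitary.conjStarAlgAut_apply]
  simp only [psdSqrt, Matrix.mul_assoc]
  rw [← Matrix.mul_assoc (↑(star _) : Matrix (Fin d) (Fin d) ℝ), Unitary.coe_star_mul_self,
    Matrix.one_mul, ← Matrix.mul_assoc (diagonal _), diagonal_mul_diagonal]
  congr 3
  funext i
  simp [Real.mul_self_sqrt (hSig.eigenvalues_nonneg i)]

lemma opNorm_transpose (M : Matrix (Fin d) (Fin d) ℝ) : opNorm Mᵀ = opNorm M := by
  simpa [opNorm, l2_opNorm_toEuclideanCLM] using l2_opNorm_conjTranspose M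

lemma opNorm_transpose_mul_self (M : Matrix (Fin d) (Fin d) ℝ) :
    opNorm (Mᵀ * M) = opNorm M ^ 2 := by
  have h := l2_opNorm_conjTranspose_mul_self M
  rw [conjTranspose_eq_transpose_of_trivial] at h
  rw [opNorm, opNorm, l2_opNorm_toEuclideanCLM, l2_opNorm_toEuclideanCLM, h, sq]

lemma opNorm_nonneg (M : Matrix (Fin d) (Fin d) ℝ) : 0 ≤ opNorm M := norm_nonneg _

lemma vecNorm_eq_norm_toLp (v : Fin d → ℝ) : vecNorm v = ‖WithLp.toLp 2 v‖ := by
  simp [vecNorm, EuclideanSpace.norm_eq]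

lemma vecNorm_nonneg (v : Fin d → ℝ) : 0 ≤ vecNorm v := Real.sqrt_nonneg _

lemma dotProduct_self_eq_vecNorm_sq (v : Fin d → ℝ) : v ⬝ᵥ v = vecNorm v ^ 2 := by
  rw [vecNorm, Real.sq_sqrt (by positivity)]
  simp [dotProduct, sq]

lemma vecNorm_mulVec_le (M : Matrix (Fin d) (Fin d) ℝ) (v : Fin d → ℝ) :
    vecNorm (M *ᵥ v) ≤ opNorm M * vecNorm v := by
  rw [vecNorm_eq_norm_toLp, vecNorm_eq_norm_toLp, ← toEuclideanCLM_toLp]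
  exact (toEuclideanCLM (𝕜 := ℝ) M).le_opNorm _

lemma dotProduct_mulVec_le_opNorm_mul_vecNorm_sq (M : Matrix (Fin d) (Fin d) ℝ) (v : Fin d → ℝ) :
    v ⬝ᵥ M *ᵥ v ≤ opNorm M * vecNorm v ^ 2 := by
  set x := WithLp.toLp 2 v
  calc v ⬝ᵥ M *ᵥ v = ⟪x, toEuclideanCLM (𝕜 := ℝ) M x⟫ := (inner_toEuclideanCLM M x x).symm
    _ ≤ ‖x‖ * ‖toEuclideanCLM (𝕜 := ℝ) M x‖ := real_inner_le_norm _ _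
    _ ≤ ‖x‖ * (opNorm M * ‖x‖) := by gcongr; exact (toEuclideanCLM (𝕜 := ℝ) M).le_opNorm x
    _ = opNorm M * vecNorm v ^ 2 := by rw [vecNorm_eq_norm_toLp]; ring

lemma frobNorm_nonneg (M : Matrix (Fin d) (Fin d) ℝ) : 0 ≤ frobNorm M := Real.sqrt_nonneg _

lemma frobNorm_sq (M : Matrix (Fin d) (Fin d) ℝ) : frobNorm M ^ 2 = ∑ i, ∑ j, M i j ^ 2 :=
  Real.sq_sqrt (by positivity)

lemma frobNorm_sq_eq_sum_vecNorm_col_sq (M : Matrix (Fin d) (Fin d) ℝ) :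
    frobNorm M ^ 2 = ∑ j, vecNorm (fun i => M i j) ^ 2 := by
  rw [frobNorm_sq, Finset.sum_comm]
  simp only [vecNorm, Real.sq_sqrt (Finset.sum_nonneg fun _ _ => sq_nonneg _)]

lemma frobNorm_transpose (M : Matrix (Fin d) (Fin d) ℝ) : frobNorm Mᵀ = frobNorm M := by
  rw [frobNorm, frobNorm, Finset.sum_comm]
  rfl

lemma trace_transpose_mul_self (N : Matrix (Fin d) (Fin d) ℝ) :
    trace (Nᵀ * N) = frobNorm N ^ 2 := by
  rw [frobNorm_sq, Finset.sum_comm]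
  simp only [trace, diag, mul_apply, transpose_apply, sq]

lemma frobNorm_mul_le_opNorm_mul (A B : Matrix (Fin d) (Fin d) ℝ) :
    frobNorm (A * B) ≤ opNorm A * frobNorm B := by
  have hcol : ∀ j, vecNorm (fun i => (A * B) i j) ≤ opNorm A * vecNorm (fun i => B i j) :=
    fun j => vecNorm_mulVec_le A (fun i => B i j)
  rw [← pow_le_pow_iff_left₀ (frobNorm_nonneg _) (mul_nonneg (opNorm_nonneg A) (frobNorm_nonneg B)) two_ne_zero,
    mul_pow, frobNorm_sq_eq_sum_vecNorm_col_sq, frobNorm_sq_eq_sum_vecNorm_col_sq, Finset.mul_sum]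
  gcongr with j
  rw [← mul_pow]
  exact pow_le_pow_left₀ (vecNorm_nonneg _) (hcol j) 2

lemma frobNorm_mul_le_mul_opNorm (A B : Matrix (Fin d) (Fin d) ℝ) :
    frobNorm (A * B) ≤ frobNorm A * opNorm B := by
  rw [← frobNorm_transpose, transpose_mul, ← frobNorm_transpose A, ← opNorm_transpose B, mul_comm]
  exact frobNorm_mul_le_opNorm_mul _ _

lemma frobNorm_mul_mul_transpose_le (B N : Matrix (Fin d) (Fin d) ℝ) :
    frobNorm (B * N * Bᵀ) ≤ opNorm (Bᵀ * B) * frobNorm N := by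
  calc frobNorm (B * N * Bᵀ) = frobNorm (B * (N * Bᵀ)) := by rw [Matrix.mul_assoc]
    _ ≤ opNorm B * (frobNorm N * opNorm Bᵀ) := by
      refine (frobNorm_mul_le_opNorm_mul _ _).trans ?_
      gcongr
      · exact opNorm_nonneg B
      · exact frobNorm_mul_le_mul_opNorm _ _
    _ = opNorm (Bᵀ * B) * frobNorm N := by
      rw [opNorm_transpose, opNorm_transpose_mul_self]; ring

lemma vecNorm_mulVec_le_of_abs_dotProduct_le {Sig P : Matrix (Fin d) (Fin d) ℝ} (hP : P.IsSymm)
    {w : Fin d → ℝ} {c : ℝ} (hc : 0 ≤ c) (h : ∀ v, |v ⬝ᵥ w| ≤ c * √(v ⬝ᵥ Sig *ᵥ v)) :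
    vecNorm (P *ᵥ w) ≤ c * √(opNorm (P * Sig * P)) := by
  set y := P *ᵥ w
  have hlin : P *ᵥ y ⬝ᵥ w = vecNorm y ^ 2 := by
    rw [dotProduct_mulVec_comm_of_isSymm hP, dotProduct_self_eq_vecNorm_sq]
  have hquad : P *ᵥ y ⬝ᵥ Sig *ᵥ (P *ᵥ y) ≤ opNorm (P * Sig * P) * vecNorm y ^ 2 := by
    rw [dotProduct_mulVec_comm_of_isSymm hP, mulVec_mulVec, mulVec_mulVec]
    exact dotProduct_mulVec_le_opNorm_mul_vecNorm_sq _ _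
  refine le_of_sq_le_mul (by positivity) ?_
  calc vecNorm y ^ 2 ≤ c * √(P *ᵥ y ⬝ᵥ Sig *ᵥ (P *ᵥ y)) := hlin ▸ (le_abs_self _).trans (h _)
    _ ≤ c * √(opNorm (P * Sig * P) * vecNorm y ^ 2) := by gcongr
    _ = c * √(opNorm (P * Sig * P)) * vecNorm y := by
      rw [Real.sqrt_mul (opNorm_nonneg _), Real.sqrt_sq (vecNorm_nonneg _)]; ring

lemma frobNorm_mul_mul_le_of_abs_trace_le {M Sig S P : Matrix (Fin d) (Fin d) ℝ}
    (hM : M.IsSymm) (hS : S.IsSymm) (hSS : S * S = Sig) (hP : P.IsSymm) {c : ℝ} (hc : 0 ≤ c)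
    (h : ∀ U : Matrix (Fin d) (Fin d) ℝ, U.IsSymm → |trace (M * U)| ≤ c * frobNorm (S * U * S)) :
    frobNorm (P * M * P) ≤ c * opNorm (P * Sig * P) := by
  set N := P * M * P
  have hN : N.IsSymm := isSymm_mul_mul hM hP
  have htrace : trace (M * (P * N * P)) = frobNorm N ^ 2 := by
    calc trace (M * (P * N * P)) = trace (P * (M * P * N)) := by
          rw [trace_mul_comm P]; simp only [Matrix.mul_assoc]
      _ = trace (Nᵀ * N) := by rw [hN.eq]; simp only [N, Matrix.mul_assoc]
      _ = frobNorm N ^ 2 := trace_transpose_mul_self N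
  have hsandwich : frobNorm (S * (P * N * P) * S) ≤ opNorm (P * Sig * P) * frobNorm N := by
    have hSP : (S * P)ᵀ = P * S := by rw [transpose_mul, hS.eq, hP.eq]
    have hSig : (S * P)ᵀ * (S * P) = P * Sig * P := by
      rw [hSP, ← hSS]; simp only [Matrix.mul_assoc]
    calc frobNorm (S * (P * N * P) * S) = frobNorm (S * P * N * (S * P)ᵀ) := by
          rw [hSP]; simp only [Matrix.mul_assoc]
      _ ≤ opNorm (P * Sig * P) * frobNorm N := hSig ▸ frobNorm_mul_mul_transpose_le _ _
  refine le_of_sq_le_mul (by positivity [opNorm_nonneg (P * Sig * P)]) ?_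
  calc frobNorm N ^ 2 ≤ c * frobNorm (S * (P * N * P) * S) :=
        htrace ▸ (le_abs_self _).trans (h _ (isSymm_mul_mul hN hP))
    _ ≤ c * (opNorm (P * Sig * P) * frobNorm N) := by gcongr
    _ = c * opNorm (P * Sig * P) * frobNorm N := by ring

/-- consequences of the stability conditions (L.1)–(L.2) after a symmetric
transformation `P`. -/
theorem statement2 (d : ℕ) (μ : Fin d → ℝ)
    (Sig : Matrix (Fin d) (Fin d) ℝ) (hSig : Sig.PosSemidef)
    (ε : ℝ) (hε : ε ∈ Set.Ioo (0 : ℝ) 1)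
    (A : Finset (Fin d → ℝ)) (hA : A.Nonempty)
    (hstab : SatisfiesL12 μ Sig (psdSqrt hSig) ε A)
    (P : Matrix (Fin d) (Fin d) ℝ) (hP : P.IsSymm)
    (A' : Finset (Fin d → ℝ)) (hsub : A' ⊆ A)
    (hcard : (1 - ε) * (A.card : ℝ) ≤ (A'.card : ℝ)) :
    vecNorm (P.mulVec (fAvg A' id - μ)) ≤ 0.1 * Real.sqrt (opNorm (P * Sig * P)) ∧
    frobNorm (P * (fAvg A' (fun x => Matrix.vecMulVec (x - μ) (x - μ)) - Sig) * P) ≤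
      0.1 * opNorm (P * Sig * P) := by
  obtain ⟨hmean, hcov⟩ := hstab A' hsub hcard
  have hA' : A'.Nonempty := by
    have : (0 : ℝ) < A.card := by exact_mod_cast hA.card_pos
    rw [← Finset.card_pos, ← Nat.cast_pos (α := ℝ)]
    nlinarith [hε.2]
  refine ⟨vecNorm_mulVec_le_of_abs_dotProduct_le hP (by norm_num) fun v => ?_,
    frobNorm_mul_mul_le_of_abs_trace_le ?_ (isSymm_psdSqrt hSig) (psdSqrt_mul_self hSig) hP
      (by norm_num) hcov⟩
  · rw [← fAvg_sub_const hA', dotProduct_fAvg]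
    exact hmean v
  · exact (isSymm_fAvg _ _ fun x => transpose_vecMulVec _ _).sub (isHermitian_iff_isSymm.mp hSig.1)

end ListDecCov
end
end

section
/- Let α ∈ (0,1], let T be a finite nonempty multiset of points in ℝ^d, let H = E_{x∼T}[x xᵀ], and let T' be a sub-multiset of T with |T'| ≥ (α/2)·|T|. Then the points x̃ = H^{†/2} x for x ∈ T' satisfy: (i) ‖Cov_{x∼T'}[H^{†/2} x]‖_op ≤ 2/α, and (ii) ‖E_{x∼T'}[H^{†/2} x]‖₂ ≤ √(2/α). -/
open Matrix MeasureTheory ProbabilityTheory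

noncomputable section

/-!
Write `H = E_T[x xᵀ]`. The Penrose identity `H (W W) H = H` makes `P = W H W` a symmetric
idempotent, so `P ≤ 1` in the Loewner order. Since every `x xᵀ` is positive semidefinite and
`T' ≤ T`, `E_{T'}[x xᵀ] ≤ (|T| / |T'|) H ≤ (2 / α) H`; conjugating by `W`, the second moment
`M = E_{T'}[(W x)(W x)ᵀ]` satisfies `M ≤ (2 / α) P ≤ (2 / α) 1`. Both the covariance `M - μ μᵀ`
and `μ μᵀ`, for `μ = E_{T'}[W x]`, lie between `0` and `M`; this bounds the operator norm of the
first and gives `‖μ‖⁴ = μᵀ (μ μᵀ) μ ≤ (2 / α) ‖μ‖²` for the second.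
-/

open scoped MatrixOrder

namespace ListDecCov

section Averages

variable {X V : Type*}

theorem map_msAvg {W : Type*} [AddCommMonoid V] [Module ℝ V] [AddCommMonoid W] [Module ℝ W]
    (L : V →ₗ[ℝ] W) (s : Multiset X) (F : X → V) :
    L (msAvg s F) = msAvg s (fun x => L (F x)) := by
  simp only [msAvg, map_smul, map_multiset_sum, Multiset.map_map, Function.comp_def]

theorem msAvg_sub [AddCommGroup V] [Module ℝ V] (s : Multiset X) (F G : X → V) :
    msAvg s (fun x => F x - G x) = msAvg s F - msAvg s G := by
  simp only [msAvg, Multiset.sum_map_sub, smul_sub]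

theorem msAvg_const [AddCommMonoid V] [Module ℝ V] {s : Multiset X} (hs : s ≠ 0) (v : V) :
    msAvg s (fun _ => v) = v := by
  have hcard : (Multiset.card s : ℝ) ≠ 0 := by simpa using hs
  rw [msAvg, Multiset.map_const', Multiset.sum_replicate, ← Nat.cast_smul_eq_nsmul ℝ,
    inv_smul_smul₀ hcard]

variable [AddCommMonoid V] [PartialOrder V] [IsOrderedAddMonoid V] [Module ℝ V]
  [PosSMulMono ℝ V]

theorem msAvg_nonneg {s : Multiset X} {F : X → V} (hF : ∀ x ∈ s, 0 ≤ F x) :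
    0 ≤ msAvg s F :=
  smul_nonneg (by positivity) <| Multiset.sum_nonneg fun _ hy => by
    obtain ⟨x, hx, rfl⟩ := Multiset.mem_map.mp hy
    exact hF x hx

theorem msAvg_le_smul_msAvg_of_le {s t : Multiset X} (hs : s ≠ 0) (hst : s ≤ t) {F : X → V}
    (hF : ∀ x ∈ t, 0 ≤ F x) :
    msAvg s F ≤ ((Multiset.card t : ℝ) / Multiset.card s) • msAvg t F := by
  have hsum : (s.map F).sum ≤ (t.map F).sum := by
    obtain ⟨u, rfl⟩ := Multiset.le_iff_exists_add.mp hst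
    rw [Multiset.map_add, Multiset.sum_add]
    exact le_add_of_nonneg_right (Multiset.sum_nonneg fun _ hy => by
      obtain ⟨x, hx, rfl⟩ := Multiset.mem_map.mp hy
      exact hF x (Multiset.mem_add.mpr (Or.inr hx)))
  have ht : (Multiset.card t : ℝ) ≠ 0 := by
    simpa using ne_bot_of_le_ne_bot hs hst
  rw [msAvg, msAvg, smul_smul, div_mul_eq_mul_div, mul_inv_cancel₀ ht, one_div]
  exact smul_le_smul_of_nonneg_left hsum (by positivity)

end Averages

section Matrices

variable {m n : Type*} [Fintype n]

theorem vecMulVec_self_nonneg (v : n → ℝ) : 0 ≤ vecMulVec v v := by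
  simpa using (posSemidef_vecMulVec_self_star v).nonneg

theorem msAvg_vecMulVec_mulVec {X : Type*} (s : Multiset X) (f : X → n → ℝ)
    (W : Matrix m n ℝ) :
    msAvg s (fun x => vecMulVec (W *ᵥ f x) (W *ᵥ f x))
      = W * msAvg s (fun x => vecMulVec (f x) (f x)) * Wᴴ := by
  have h := map_msAvg (mulLeftLinearMap m ℝ W ∘ₗ mulRightLinearMap n ℝ Wᴴ) s
    fun x => vecMulVec (f x) (f x)
  simp only [LinearMap.comp_apply, mulLeftLinearMap_apply, mulRightLinearMap_apply,
    ← Matrix.mul_assoc, mul_vecMulVec, vecMulVec_mul] at h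
  simpa [vecMul_transpose] using h.symm

theorem dotProduct_mulVec_le_of_le_smul_one [DecidableEq n] {A : Matrix n n ℝ} {c : ℝ}
    (hAc : A ≤ c • 1) (x : n → ℝ) : x ⬝ᵥ A *ᵥ x ≤ c * (x ⬝ᵥ x) := by
  have hq : 0 ≤ x ⬝ᵥ (c • 1 - A) *ᵥ x := by
    simpa using (le_iff.mp hAc).dotProduct_mulVec_nonneg x
  rw [sub_mulVec, dotProduct_sub, smul_mulVec, one_mulVec, dotProduct_smul, smul_eq_mul] at hq
  linarith

end Matrices

theorem isStarProjection_mul_mul_star {R : Type*} [Ring R] [PartialOrder R] [StarRing R]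
    [StarOrderedRing R] {H W : R} (hH : 0 ≤ H) (hW : star W = W) (hHW : H * (W * W) * H = H) :
    IsStarProjection (W * H * star W) := by
  refine ⟨?_, (star_right_conjugate_nonneg hH W).isSelfAdjoint⟩
  rw [IsIdempotentElem, hW]
  calc W * H * W * (W * H * W) = W * (H * (W * W) * H) * W := by simp only [mul_assoc]
    _ = W * H * W := by rw [hHW]

section Covariance

variable {X : Type*} {d : ℕ}

theorem msCov_eq_msAvg (s : Multiset X) (f : X → Fin d → ℝ) :
    msCov s f = msAvg s (fun x => vecMulVec (f x - msAvg s f) (f x - msAvg s f)) := by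
  rcases eq_or_ne s 0 with rfl | hs
  · simp [msCov, msAvg]
  set μ := msAvg s f
  have hleft : msAvg s (fun x => vecMulVec (f x) μ) = vecMulVec μ μ :=
    (map_msAvg ((vecMulVecBilin ℝ ℝ).flip μ) s f).symm
  have hright : msAvg s (fun x => vecMulVec μ (f x)) = vecMulVec μ μ :=
    (map_msAvg (vecMulVecBilin ℝ ℝ μ) s f).symm
  simp only [sub_vecMulVec, vecMulVec_sub, msAvg_sub, hleft, hright, msAvg_const hs, msCov]
  abel

theorem msCov_nonneg (s : Multiset X) (f : X → Fin d → ℝ) : 0 ≤ msCov s f := by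
  rw [msCov_eq_msAvg]
  exact msAvg_nonneg fun x _ => vecMulVec_self_nonneg _

theorem vecMulVec_msAvg_le (s : Multiset X) (f : X → Fin d → ℝ) :
    vecMulVec (msAvg s f) (msAvg s f) ≤ msAvg s (fun x => vecMulVec (f x) (f x)) :=
  sub_nonneg.mp (msCov_nonneg s f)

theorem msCov_le (s : Multiset X) (f : X → Fin d → ℝ) :
    msCov s f ≤ msAvg s (fun x => vecMulVec (f x) (f x)) :=
  sub_le_self _ (vecMulVec_self_nonneg _)

end Covariance

section Norms

variable {d : ℕ}

theorem opNorm_le_of_nonneg_of_le {A : Matrix (Fin d) (Fin d) ℝ} {c : ℝ} (hc : 0 ≤ c)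
    (hA : 0 ≤ A) (hAc : A ≤ c • 1) : opNorm A ≤ c := by
  have hsymm : (toEuclideanCLM (𝕜 := ℝ) A).IsSymmetric := by
    rw [coe_toEuclideanCLM_eq_toEuclideanLin]
    exact isSymmetric_toEuclideanLin_iff.mpr hA.posSemidef.isHermitian
  rw [opNorm, ContinuousLinearMap.norm_eq_iSup_rayleighQuotient _ hsymm]
  refine ciSup_le fun x => ?_
  have hinner : inner ℝ (toEuclideanCLM (𝕜 := ℝ) A x) x = x ⬝ᵥ A *ᵥ x := by
    rw [real_inner_comm, inner_toEuclideanCLM]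
  have hnorm : ‖x‖ ^ 2 = x ⬝ᵥ x := by
    rw [← real_inner_self_eq_norm_sq, EuclideanSpace.inner_eq_star_dotProduct]
    simp
  have h0 : 0 ≤ x ⬝ᵥ A *ᵥ x := by simpa using hA.posSemidef.dotProduct_mulVec_nonneg x
  rw [ContinuousLinearMap.rayleighQuotient, ContinuousLinearMap.reApplyInnerSelf,
    RCLike.re_to_real, hinner, abs_div, abs_of_nonneg h0, abs_of_nonneg (sq_nonneg _)]
  refine div_le_of_le_mul₀ (sq_nonneg _) hc ?_
  rw [hnorm]
  exact dotProduct_mulVec_le_of_le_smul_one hAc x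

theorem vecNorm_le_sqrt_of_vecMulVec_le {v : Fin d → ℝ} {c : ℝ} (h : vecMulVec v v ≤ c • 1) :
    vecNorm v ≤ √c := by
  have hq := dotProduct_mulVec_le_of_le_smul_one h v
  rw [vecMulVec_mulVec, dotProduct_smul, MulOpposite.smul_eq_mul_unop, MulOpposite.unop_op] at hq
  have hvv : ∑ i, v i ^ 2 = v ⬝ᵥ v := by simp [dotProduct, sq]
  rw [vecNorm, hvv]
  rcases (hvv ▸ by positivity : 0 ≤ v ⬝ᵥ v).eq_or_lt with hzero | hpos
  · simp [← hzero]
  · exact Real.sqrt_le_sqrt (le_of_mul_le_mul_right hq hpos)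

end Norms

/-- after normalizing by `H^{†/2}` with `H = E_{x∼T}[x xᵀ]`, any sub-multiset
`T'` of `T` with `|T'| ≥ (α/2)|T|` has bounded empirical covariance and mean.
Here `W` plays the role of `H^{†/2}`: it is PSD and `W W` is the Moore–Penrose
pseudoinverse of `H`. -/
theorem statement4 (d : ℕ) (α : ℝ) (hα : α ∈ Set.Ioc (0 : ℝ) 1)
    (T : Multiset (Fin d → ℝ)) (hT : T ≠ 0)
    (T' : Multiset (Fin d → ℝ)) (hsub : T' ≤ T)
    (hcard : (α / 2) * (Multiset.card T : ℝ) ≤ (Multiset.card T' : ℝ))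
    (W : Matrix (Fin d) (Fin d) ℝ) (hW : W.PosSemidef)
    (hMP : IsMoorePenrose (msAvg T fun x => Matrix.vecMulVec x x) (W * W)) :
    opNorm (msCov T' (fun x => W.mulVec x)) ≤ 2 / α ∧
    vecNorm (msAvg T' (fun x => W.mulVec x)) ≤ Real.sqrt (2 / α) := by
  obtain ⟨hα0, -⟩ := hα
  set H := msAvg T fun x => vecMulVec x x
  have hTpos : (0 : ℝ) < Multiset.card T := by exact_mod_cast Multiset.card_pos.mpr hT
  have hT'pos : (0 : ℝ) < Multiset.card T' := lt_of_lt_of_le (by positivity) hcard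
  have hratio : (Multiset.card T : ℝ) / Multiset.card T' ≤ 2 / α := by
    rw [div_le_div_iff₀ hT'pos hα0]
    linarith
  have hT' : T' ≠ 0 := Multiset.card_pos.mp (by exact_mod_cast hT'pos)
  have hP := isStarProjection_mul_mul_star
    (msAvg_nonneg fun x _ => vecMulVec_self_nonneg x) hW.1 hMP.1
  have hM2 : msAvg T' (fun x => vecMulVec (W *ᵥ x) (W *ᵥ x)) ≤ (2 / α) • 1 := calc
    _ = W * msAvg T' (fun x => vecMulVec x x) * Wᴴ := msAvg_vecMulVec_mulVec T' (fun x => x) W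
    _ ≤ W * (((Multiset.card T : ℝ) / Multiset.card T') • H) * Wᴴ :=
      star_right_conjugate_le_conjugate
        (msAvg_le_smul_msAvg_of_le hT' hsub fun x _ => vecMulVec_self_nonneg x) W
    _ = ((Multiset.card T : ℝ) / Multiset.card T') • (W * H * Wᴴ) := by
      rw [Matrix.mul_smul, Matrix.smul_mul]
    _ ≤ (2 / α) • (W * H * Wᴴ) := smul_le_smul_of_nonneg_right hratio hP.nonneg
    _ ≤ (2 / α) • 1 := smul_le_smul_of_nonneg_left hP.le_one (by positivity)
  exact ⟨opNorm_le_of_nonneg_of_le (by positivity) (msCov_nonneg _ _) ((msCov_le _ _).trans hM2),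
    vecNorm_le_sqrt_of_vecMulVec_le ((vecMulVec_msAvg_le _ _).trans hM2)⟩

end ListDecCov
end
end

section
/- Let G be a d×d real matrix with singular value decomposition G = U Λ Vᵀ, where U and V are orthogonal d×d matrices and Λ is a diagonal matrix with nonnegative entries. Let B be a symmetric d×d matrix and let ρ ≥ 1 be such that ‖G G† − G B Gᵀ‖_F ≤ ρ. Then there exists a diagonal d×d matrix Δ with all diagonal entries in {0,1}, satisfying: (1) every diagonal entry of Δ equal to 1 occurs at a position where the corresponding diagonal entry of Λ is strictly positive (equivalently, Δ ⪯ Λ Λ†); (2) ‖Λ Λ† − Δ‖_F ≤ 2ρ; and (3) with L = V Δ Vᵀ and R = G†, ‖L (R Rᵀ − B) Lᵀ‖_F ≤ 2ρ·‖B‖_op. -/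
open Matrix MeasureTheory ProbabilityTheory

noncomputable section

namespace ListDecCov

/-! After rotating by the singular vectors everything is diagonal. Write `Λ = diag λ`,
`C = Vᵀ B V` and `E = Vᵀ (G† G†ᵀ - B) V`. The Penrose equations give `G G† = G G† G†ᵀ Gᵀ`, so
the hypothesis reads `‖Λ E Λ‖_F ≤ ρ`. Keep the coordinates with `λᵢ² Cᵢᵢ ≥ 1/2` in `Δ`. When
`λᵢ ≠ 0` we have `(Λ E Λ)ᵢᵢ = 1 - λᵢ² Cᵢᵢ`, which exceeds `1/2` off the kept coordinates;
this bounds `ΛΛ† - Δ` by `2 ‖Λ E Λ‖_F`. Since `Cᵢᵢ ≤ ‖B‖_op`, each kept `i` has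
`2 ‖B‖_op λᵢ² ≥ 1`, so `Δ E Δ` is entrywise at most `2 ‖B‖_op` times `Λ E Λ`. -/

section

variable {d : ℕ}

lemma frobNorm_le_mul_of_sq_le {A N : Matrix (Fin d) (Fin d) ℝ} {c : ℝ} (hc : 0 ≤ c)
    (h : ∀ i j, A i j ^ 2 ≤ c ^ 2 * N i j ^ 2) : frobNorm A ≤ c * frobNorm N := by
  rw [frobNorm, frobNorm, ← Real.sqrt_sq hc, ← Real.sqrt_mul (sq_nonneg c), Finset.mul_sum]
  refine Real.sqrt_le_sqrt (Finset.sum_le_sum fun i _ => ?_)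
  rw [Finset.mul_sum]
  exact Finset.sum_le_sum fun j _ => h i j

lemma frobNorm_eq_sqrt_trace (M : Matrix (Fin d) (Fin d) ℝ) :
    frobNorm M = Real.sqrt (Mᵀ * M).trace := by
  simp only [frobNorm, trace, diag, mul_apply, transpose_apply, sq]
  rw [Finset.sum_comm]

lemma frobNorm_orthogonal_mul_mul {U W : Matrix (Fin d) (Fin d) ℝ} (hU : Uᵀ * U = 1)
    (hW : Wᵀ * W = 1) (M : Matrix (Fin d) (Fin d) ℝ) :
    frobNorm (U * M * Wᵀ) = frobNorm M := by
  have h : (U * M * Wᵀ)ᵀ * (U * M * Wᵀ) = W * (Mᵀ * M) * Wᵀ := by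
    simp only [transpose_mul, transpose_transpose, Matrix.mul_assoc]
    rw [← Matrix.mul_assoc Uᵀ, hU, Matrix.one_mul]
  rw [frobNorm_eq_sqrt_trace, frobNorm_eq_sqrt_trace, h, trace_mul_cycle, hW, Matrix.one_mul]

lemma dotProduct_mulVec_le_opNorm (B : Matrix (Fin d) (Fin d) ℝ) {v : Fin d → ℝ}
    (hv : v ⬝ᵥ v = 1) : v ⬝ᵥ B *ᵥ v ≤ opNorm B := by
  set x : EuclideanSpace ℝ (Fin d) := WithLp.toLp 2 v
  have hx : ‖x‖ = 1 := by
    rw [EuclideanSpace.norm_eq, ← Real.sqrt_one, ← hv]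
    simp [x, dotProduct, sq]
  have hinner : v ⬝ᵥ B *ᵥ v = inner ℝ x (toEuclideanCLM (𝕜 := ℝ) B x) := by
    simp [x, dotProduct, PiLp.inner_apply, mul_comm]
  calc v ⬝ᵥ B *ᵥ v ≤ ‖x‖ * ‖toEuclideanCLM (𝕜 := ℝ) B x‖ :=
        hinner ▸ real_inner_le_norm _ _
    _ ≤ ‖x‖ * (opNorm B * ‖x‖) := by gcongr; exact ContinuousLinearMap.le_opNorm _ _
    _ = opNorm B := by rw [hx, one_mul, mul_one]

lemma transpose_mul_mul_apply_self_le_opNorm {V : Matrix (Fin d) (Fin d) ℝ} (hV : Vᵀ * V = 1)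
    (B : Matrix (Fin d) (Fin d) ℝ) (i : Fin d) : (Vᵀ * B * V) i i ≤ opNorm B := by
  have hcol : (fun k => V k i) ⬝ᵥ (fun k => V k i) = 1 := by
    simpa [mul_apply, dotProduct] using congrFun (congrFun hV i) i
  convert dotProduct_mulVec_le_opNorm B hcol using 1
  simp only [mul_apply, transpose_apply, dotProduct, mulVec, Finset.sum_mul, Finset.mul_sum]
  rw [Finset.sum_comm]
  exact Finset.sum_congr rfl fun _ _ => Finset.sum_congr rfl fun _ _ => by ring

lemma conj_mul_mul_transpose (P D Q X : Matrix (Fin d) (Fin d) ℝ) :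
    (P * D * Qᵀ) * X * (P * D * Qᵀ)ᵀ = P * (D * (Qᵀ * X * Q) * Dᵀ) * Pᵀ := by
  simp only [transpose_mul, transpose_transpose, Matrix.mul_assoc]

lemma mul_mul_transpose_mul_mul_mul {Q : Matrix (Fin d) (Fin d) ℝ} (hQ : Qᵀ * Q = 1)
    (P A B R : Matrix (Fin d) (Fin d) ℝ) : P * A * Qᵀ * (Q * B * R) = P * (A * B) * R := by
  simp only [Matrix.mul_assoc]
  rw [← Matrix.mul_assoc Qᵀ, hQ, Matrix.one_mul]

lemma transpose_mul_mul_mul_transpose_mul {V : Matrix (Fin d) (Fin d) ℝ} (hV : Vᵀ * V = 1)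
    (M : Matrix (Fin d) (Fin d) ℝ) : Vᵀ * (V * M * Vᵀ) * V = M := by
  simp only [Matrix.mul_assoc]
  rw [hV, Matrix.mul_one, ← Matrix.mul_assoc, hV, Matrix.one_mul]

namespace IsMoorePenrose

variable {H X Y : Matrix (Fin d) (Fin d) ℝ}

lemma mul_right_eq (hX : IsMoorePenrose H X) (hY : IsMoorePenrose H Y) : H * X = H * Y :=
  calc H * X = (H * Y * H * X)ᵀ := by rw [hY.1, hX.2.2.1]
    _ = (H * X)ᵀ * (H * Y)ᵀ := by rw [Matrix.mul_assoc (H * Y), transpose_mul]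
    _ = H * X * H * Y := by rw [hX.2.2.1, hY.2.2.1, Matrix.mul_assoc (H * X)]
    _ = H * Y := by rw [hX.1]

lemma mul_left_eq (hX : IsMoorePenrose H X) (hY : IsMoorePenrose H Y) : X * H = Y * H :=
  calc X * H = (X * (H * Y * H))ᵀ := by rw [hY.1, hX.2.2.2]
    _ = (Y * H)ᵀ * (X * H)ᵀ := by rw [← transpose_mul]; simp only [Matrix.mul_assoc]
    _ = Y * (H * X * H) := by rw [hX.2.2.2, hY.2.2.2]; simp only [Matrix.mul_assoc]
    _ = Y * H := by rw [hX.1]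

lemma unique (hX : IsMoorePenrose H X) (hY : IsMoorePenrose H Y) : X = Y :=
  calc X = X * H * X := hX.2.1.symm
    _ = Y * (H * Y) := by rw [hX.mul_left_eq hY, Matrix.mul_assoc, hX.mul_right_eq hY]
    _ = Y := by rw [← Matrix.mul_assoc, hY.2.1]

lemma mul_eq_mul_mul_transpose (hX : IsMoorePenrose H X) : H * X = H * (X * Xᵀ) * Hᵀ :=
  calc H * X = H * X * (H * X)ᵀ := by rw [hX.2.2.1, ← Matrix.mul_assoc, hX.1]
    _ = H * (X * Xᵀ) * Hᵀ := by simp only [transpose_mul, Matrix.mul_assoc]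

lemma orthogonal_conj {U V : Matrix (Fin d) (Fin d) ℝ} (hU : Uᵀ * U = 1) (hV : Vᵀ * V = 1)
    (hX : IsMoorePenrose H X) : IsMoorePenrose (U * H * Vᵀ) (V * X * Uᵀ) := by
  obtain ⟨h1, h2, h3, h4⟩ := hX
  have hUHX : U * H * Vᵀ * (V * X * Uᵀ) = U * (H * X) * Uᵀ :=
    mul_mul_transpose_mul_mul_mul hV _ _ _ _
  have hVXH : V * X * Uᵀ * (U * H * Vᵀ) = V * (X * H) * Vᵀ :=
    mul_mul_transpose_mul_mul_mul hU _ _ _ _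
  refine ⟨?_, ?_, ?_, ?_⟩
  · rw [hUHX, mul_mul_transpose_mul_mul_mul hU, h1]
  · rw [hVXH, mul_mul_transpose_mul_mul_mul hV, h2]
  · rw [hUHX, transpose_mul, transpose_mul, transpose_transpose, h3]
    simp only [Matrix.mul_assoc]
  · rw [hVXH, transpose_mul, transpose_mul, transpose_transpose, h4]
    simp only [Matrix.mul_assoc]

end IsMoorePenrose

lemma isMoorePenrose_diagonal (lam : Fin d → ℝ) :
    IsMoorePenrose (diagonal lam) (diagonal lam⁻¹) := by
  refine ⟨?_, ?_, ?_, ?_⟩ <;> simp only [diagonal_mul_diagonal, diagonal_transpose]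
  all_goals
    congr 1; funext i
    rcases eq_or_ne (lam i) 0 with hi | hi <;> simp [hi]

def halfSelector (lam : Fin d → ℝ) (C : Matrix (Fin d) (Fin d) ℝ) : Fin d → ℝ :=
  fun i => if 1 / 2 ≤ lam i ^ 2 * C i i then 1 else 0

section halfSelector

variable (lam : Fin d → ℝ) (C : Matrix (Fin d) (Fin d) ℝ)

lemma halfSelector_eq_zero_or_one (i : Fin d) :
    halfSelector lam C i = 0 ∨ halfSelector lam C i = 1 := by
  unfold halfSelector; split_ifs <;> simp

lemma ne_zero_of_halfSelector_eq_one {i : Fin d} (h : halfSelector lam C i = 1) :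
    lam i ≠ 0 := by
  rintro hi
  simp [halfSelector, hi] at h

lemma one_le_two_mul_sq_of_halfSelector_eq_one {β : ℝ} (hC : ∀ i, C i i ≤ β) {i : Fin d}
    (h : halfSelector lam C i = 1) : 1 ≤ 2 * β * lam i ^ 2 := by
  have hsel : 1 / 2 ≤ lam i ^ 2 * C i i := by
    by_contra hlt
    simp only [halfSelector, if_neg hlt] at h
    exact zero_ne_one h
  nlinarith [mul_le_mul_of_nonneg_left (hC i) (sq_nonneg (lam i))]

lemma frobNorm_diagonal_sub_halfSelector_le :
    frobNorm (diagonal lam * diagonal lam⁻¹ - diagonal (halfSelector lam C)) ≤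
      2 * frobNorm (diagonal lam * (diagonal lam⁻¹ * diagonal lam⁻¹ - C) * diagonal lam) := by
  refine frobNorm_le_mul_of_sq_le zero_le_two fun i j => ?_
  rcases eq_or_ne i j with rfl | hij
  · rcases eq_or_ne (lam i) 0 with hi | hi
    · norm_num [halfSelector, hi]
    · simp only [diagonal_mul_diagonal, Matrix.sub_apply, diagonal_mul, mul_diagonal,
        diagonal_apply_eq, Pi.inv_apply, halfSelector]
      have hN : lam i * ((lam i)⁻¹ * (lam i)⁻¹ - C i i) * lam i = 1 - lam i ^ 2 * C i i := by
        field_simp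
      rw [mul_inv_cancel₀ hi, hN]
      split_ifs <;> nlinarith
  · simp [hij]; positivity

lemma frobNorm_halfSelector_mul_mul_le {β : ℝ} (hβ : 0 ≤ β) (hC : ∀ i, C i i ≤ β)
    (E : Matrix (Fin d) (Fin d) ℝ) :
    frobNorm (diagonal (halfSelector lam C) * E * diagonal (halfSelector lam C)) ≤
      2 * β * frobNorm (diagonal lam * E * diagonal lam) := by
  refine frobNorm_le_mul_of_sq_le (by positivity) fun i j => ?_
  simp only [diagonal_mul, mul_diagonal]
  rcases halfSelector_eq_zero_or_one lam C i with hi | hi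
  · rw [hi, zero_mul, zero_mul, zero_pow two_ne_zero]; positivity
  rcases halfSelector_eq_zero_or_one lam C j with hj | hj
  · rw [hj, mul_zero, zero_pow two_ne_zero]; positivity
  have hi' := one_le_two_mul_sq_of_halfSelector_eq_one lam C hC hi
  have hj' := one_le_two_mul_sq_of_halfSelector_eq_one lam C hC hj
  rw [hi, hj, one_mul, mul_one]
  calc E i j ^ 2 ≤ (2 * β * lam i ^ 2) * (2 * β * lam j ^ 2) * E i j ^ 2 :=
        le_mul_of_one_le_left (sq_nonneg _) (one_le_mul_of_one_le_of_one_le hi' hj')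
    _ = (2 * β) ^ 2 * (lam i * E i j * lam j) ^ 2 := by ring

end halfSelector

end

theorem statement16_general (d : ℕ) (G U Λ V B Gd Λd : Matrix (Fin d) (Fin d) ℝ)
    (hU : Uᵀ * U = 1) (hV : Vᵀ * V = 1)
    (hΛdiag : Λ.IsDiag) (hΛnonneg : ∀ i, 0 ≤ Λ i i)
    (hSVD : G = U * Λ * Vᵀ)
    (ρ : ℝ)
    (hGd : IsMoorePenrose G Gd) (hΛd : IsMoorePenrose Λ Λd)
    (hbound : frobNorm (G * Gd - G * B * Gᵀ) ≤ ρ) :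
    ∃ Δ : Matrix (Fin d) (Fin d) ℝ, Δ.IsDiag ∧
      (∀ i, Δ i i = 0 ∨ Δ i i = 1) ∧
      (∀ i, Δ i i = 1 → 0 < Λ i i) ∧
      frobNorm (Λ * Λd - Δ) ≤ 2 * ρ ∧
      frobNorm ((V * Δ * Vᵀ) * (Gd * Gdᵀ - B) * (V * Δ * Vᵀ)ᵀ) ≤ 2 * ρ * opNorm B := by
  obtain ⟨lam, rfl⟩ : ∃ lam, Λ = diagonal lam := ⟨Λ.diag, hΛdiag.diagonal_diag.symm⟩
  obtain rfl : Λd = diagonal lam⁻¹ := hΛd.unique (isMoorePenrose_diagonal lam)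
  have hGd_eq : Gd = V * diagonal lam⁻¹ * Uᵀ :=
    hGd.unique (hSVD ▸ (isMoorePenrose_diagonal lam).orthogonal_conj hU hV)
  set C := Vᵀ * B * V
  set E := Vᵀ * (Gd * Gdᵀ - B) * V with hEdef
  have hE : E = diagonal lam⁻¹ * diagonal lam⁻¹ - C := by
    have hGdGd : Gd * Gdᵀ = V * (diagonal lam⁻¹ * diagonal lam⁻¹) * Vᵀ := by
      simpa only [Matrix.mul_one, hU, diagonal_transpose, ← hGd_eq]
        using conj_mul_mul_transpose V (diagonal lam⁻¹) U 1
    rw [hEdef, hGdGd, Matrix.mul_sub, Matrix.sub_mul, transpose_mul_mul_mul_transpose_mul hV]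
  have hN : frobNorm (diagonal lam * E * diagonal lam) ≤ ρ := by
    have h : G * Gd - G * B * Gᵀ = U * (diagonal lam * E * diagonal lam) * Uᵀ := by
      rw [hGd.mul_eq_mul_mul_transpose, ← Matrix.sub_mul, ← Matrix.mul_sub, hSVD,
        conj_mul_mul_transpose, diagonal_transpose]
    rwa [h, frobNorm_orthogonal_mul_mul hU hU] at hbound
  refine ⟨diagonal (halfSelector lam C), isDiag_diagonal _, fun i => ?_, fun i hi => ?_, ?_, ?_⟩
  · simpa only [diagonal_apply_eq] using halfSelector_eq_zero_or_one lam C i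
  · simp only [diagonal_apply_eq] at hi hΛnonneg ⊢
    exact (hΛnonneg i).lt_of_ne' (ne_zero_of_halfSelector_eq_one lam C hi)
  · calc _ ≤ 2 * frobNorm (diagonal lam * E * diagonal lam) :=
          hE ▸ frobNorm_diagonal_sub_halfSelector_le lam C
      _ ≤ 2 * ρ := by linarith
  · rw [conj_mul_mul_transpose, frobNorm_orthogonal_mul_mul hV hV, diagonal_transpose]
    calc _ ≤ 2 * opNorm B * frobNorm (diagonal lam * E * diagonal lam) :=
          frobNorm_halfSelector_mul_mul_le lam C (norm_nonneg _)
            (transpose_mul_mul_apply_self_le_opNorm hV B) E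
      _ ≤ 2 * opNorm B * ρ :=
          mul_le_mul_of_nonneg_left hN (mul_nonneg zero_le_two (norm_nonneg _))
      _ = 2 * ρ * opNorm B := by ring

/-- given an SVD `G = U Λ Vᵀ` and a symmetric `B` with
`‖G G† − G B Gᵀ‖_F ≤ ρ`, there is a 0/1 diagonal matrix `Δ` supported on the nonzero
singular values of `G` with `‖Λ Λ† − Δ‖_F ≤ 2ρ`, and with `L = V Δ Vᵀ`, `R = G†`,
`‖L (R Rᵀ − B) Lᵀ‖_F ≤ 2ρ‖B‖_op`. Pseudoinverses are specified via Penrose equations. -/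
theorem statement16 (d : ℕ) (G U Λ V B Gd Λd : Matrix (Fin d) (Fin d) ℝ)
    (hU : Uᵀ * U = 1) (hV : Vᵀ * V = 1)
    (hΛdiag : Λ.IsDiag) (hΛnonneg : ∀ i, 0 ≤ Λ i i)
    (hSVD : G = U * Λ * Vᵀ)
    (hB : B.IsSymm) (ρ : ℝ) (hρ : 1 ≤ ρ)
    (hGd : IsMoorePenrose G Gd) (hΛd : IsMoorePenrose Λ Λd)
    (hbound : frobNorm (G * Gd - G * B * Gᵀ) ≤ ρ) :
    ∃ Δ : Matrix (Fin d) (Fin d) ℝ, Δ.IsDiag ∧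
      (∀ i, Δ i i = 0 ∨ Δ i i = 1) ∧
      (∀ i, Δ i i = 1 → 0 < Λ i i) ∧
      frobNorm (Λ * Λd - Δ) ≤ 2 * ρ ∧
      frobNorm ((V * Δ * Vᵀ) * (Gd * Gdᵀ - B) * (V * Δ * Vᵀ)ᵀ) ≤ 2 * ρ * opNorm B :=
  statement16_general d G U Λ V B Gd Λd hU hV hΛdiag hΛnonneg hSVD ρ hGd hΛd hbound

end ListDecCov
end
end

section
/- Let A' be a symmetric d×d real matrix all of whose eigenvalues belong to {−1, 0, 1}, and let B' be an arbitrary d×d real matrix. Then ‖B' − A'‖_F² ≥ rank(A') − rank(B'). -/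
open Matrix MeasureTheory ProbabilityTheory

noncomputable section

/-!
Let `W = range A' ∩ ker B'`. The eigenvalues satisfy `λ³ = λ`, so `A'³ = A'`, and a symmetric
matrix with this property is an isometry on its range; hence `B' - A'` acts on `W` as `-A'` and
preserves norms there. Summing `‖(B' - A') v‖² = 1` over an orthonormal basis `v` of `W` and
applying Bessel's inequality to the rows of `B' - A'` gives `dim W ≤ ‖B' - A'‖_F²`, while
`dim W ≥ rank A' - rank B'` by counting dimensions.
-/

open LinearMap (range ker mem_ker)

theorem LinearMap.finrank_range_le_finrank_inf_ker_add {K U V W : Type*} [DivisionRing K]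
    [AddCommGroup U] [Module K U] [AddCommGroup V] [Module K V] [AddCommGroup W] [Module K W]
    [FiniteDimensional K V] (f : U →ₗ[K] V) (g : V →ₗ[K] W) :
    Module.finrank K (range f) ≤
      Module.finrank K ↥(range f ⊓ ker g) + Module.finrank K (range g) := by
  have h_sup_inf := Submodule.finrank_sup_add_finrank_inf_eq (range f) (ker g)
  have h_sup_le := Submodule.finrank_le (range f ⊔ ker g)
  have h_rank_nullity := g.finrank_range_add_finrank_ker
  omega

theorem Matrix.IsHermitian.pow_three_eq_self {n : Type*} [Fintype n] [DecidableEq n]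
    {A : Matrix n n ℝ} (hA : A.IsHermitian)
    (heig : ∀ i, hA.eigenvalues i ∈ ({-1, 0, 1} : Set ℝ)) : A ^ 3 = A := by
  have hspec : Set.EqOn (fun x : ℝ => x ^ 3) id (spectrum ℝ A) := by
    rw [hA.spectrum_real_eq_range_eigenvalues]
    rintro _ ⟨i, rfl⟩
    obtain h | h | h : hA.eigenvalues i = -1 ∨ hA.eigenvalues i = 0 ∨ hA.eigenvalues i = 1 :=
      heig i
    all_goals simp only [h, id]; norm_num
  calc A ^ 3 = cfc (fun x : ℝ => x ^ 3) A := (cfc_pow_id A 3 hA.isSelfAdjoint).symm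
    _ = cfc id A := cfc_congr hspec
    _ = A := cfc_id ℝ A hA.isSelfAdjoint

theorem LinearMap.IsSymmetric.norm_apply_eq_of_mem_range {𝕜 E : Type*} [RCLike 𝕜]
    [NormedAddCommGroup E] [InnerProductSpace 𝕜 E] {T : E →ₗ[𝕜] E} (hT : T.IsSymmetric)
    (hT3 : T ^ 3 = T) {x : E} (hx : x ∈ range T) : ‖T x‖ = ‖x‖ := by
  obtain ⟨w, rfl⟩ := hx
  have h : inner 𝕜 (T (T w)) (T (T w)) = inner 𝕜 (T w) (T w) := by
    rw [hT, ← Module.End.mul_apply, ← Module.End.mul_apply, ← pow_three', hT3]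
  rw [inner_self_eq_norm_sq_to_K, inner_self_eq_norm_sq_to_K] at h
  exact (pow_left_inj₀ (norm_nonneg _) (norm_nonneg _) two_ne_zero).mp (by exact_mod_cast h)

theorem Matrix.sum_norm_toEuclideanLin_sq_le {m n ι : Type*} [Fintype m] [Fintype n]
    [DecidableEq n] [Fintype ι] (M : Matrix m n ℝ) {v : ι → EuclideanSpace ℝ n}
    (hv : Orthonormal ℝ v) :
    ∑ k, ‖M.toEuclideanLin (v k)‖ ^ 2 ≤ ∑ i, ∑ j, M i j ^ 2 := by
  set row : m → EuclideanSpace ℝ n := fun i => WithLp.toLp 2 (M i)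
  have hrow : ∀ x, ‖M.toEuclideanLin x‖ ^ 2 = ∑ i, ‖inner ℝ (row i) x‖ ^ 2 := by
    intro x
    rw [EuclideanSpace.norm_sq_eq]
    simp [row, mulVec, dotProduct, PiLp.inner_apply, mul_comm]
  have hrow_norm : ∀ i, ‖row i‖ ^ 2 = ∑ j, M i j ^ 2 := by
    intro i
    simp [row, EuclideanSpace.norm_sq_eq]
  calc ∑ k, ‖M.toEuclideanLin (v k)‖ ^ 2
      = ∑ i, ∑ k, ‖inner ℝ (v k) (row i)‖ ^ 2 := by
        simp_rw [hrow, real_inner_comm (row _)]; exact Finset.sum_comm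
    _ ≤ ∑ i, ‖row i‖ ^ 2 := Finset.sum_le_sum fun i _ => hv.sum_inner_products_le (row i)
    _ = ∑ i, ∑ j, M i j ^ 2 := by simp_rw [hrow_norm]

theorem Matrix.finrank_le_sum_sq_of_norm_le_norm_toEuclideanLin {m n : Type*} [Fintype m]
    [Fintype n] [DecidableEq n] (M : Matrix m n ℝ) (W : Submodule ℝ (EuclideanSpace ℝ n))
    (hW : ∀ x ∈ W, ‖x‖ ≤ ‖M.toEuclideanLin x‖) :
    (Module.finrank ℝ W : ℝ) ≤ ∑ i, ∑ j, M i j ^ 2 := by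
  set b := stdOrthonormalBasis ℝ W
  have hv : Orthonormal ℝ fun k => (b k : EuclideanSpace ℝ n) :=
    b.orthonormal.comp_linearIsometry W.subtypeₗᵢ
  calc (Module.finrank ℝ W : ℝ) = ∑ k, ‖(b k : EuclideanSpace ℝ n)‖ ^ 2 := by
        simp [hv.1]
    _ ≤ ∑ k, ‖M.toEuclideanLin (b k)‖ ^ 2 := by
        gcongr with k
        exact hW _ (b k).2
    _ ≤ ∑ i, ∑ j, M i j ^ 2 := M.sum_norm_toEuclideanLin_sq_le hv

theorem Matrix.rank_eq_finrank_range_toEuclideanLin {𝕜 m n : Type*} [RCLike 𝕜] [Fintype m]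
    [Fintype n] [DecidableEq n] (A : Matrix m n 𝕜) :
    A.rank = Module.finrank 𝕜 (range A.toEuclideanLin) := by
  rw [toEuclideanLin_eq_toLin_orthonormal]
  exact rank_eq_finrank_range_toLin _ _ _

namespace ListDecCov

/-- if `A'` is symmetric with all eigenvalues in `{−1, 0, 1}`, then for any
matrix `B'`, `‖B' − A'‖_F² ≥ rank(A') − rank(B')`. -/
theorem statement17 (d : ℕ) (A' B' : Matrix (Fin d) (Fin d) ℝ)
    (hA : A'.IsHermitian)
    (heig : ∀ i, hA.eigenvalues i ∈ ({-1, 0, 1} : Set ℝ)) :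
    (A'.rank : ℝ) - (B'.rank : ℝ) ≤ frobNorm (B' - A') ^ 2 := by
  set T := A'.toEuclideanLin
  set S := B'.toEuclideanLin
  have hT3 : T ^ 3 = T := by
    rw [← toLpLin_pow, hA.pow_three_eq_self heig]
  have hT : T.IsSymmetric := isSymmetric_toEuclideanLin_iff.mpr hA
  have hW : ∀ x ∈ range T ⊓ ker S, ‖x‖ ≤ ‖(B' - A').toEuclideanLin x‖ := by
    rintro x ⟨hxT, hxS⟩
    rw [map_sub, LinearMap.sub_apply, mem_ker.mp hxS, zero_sub, norm_neg,
      hT.norm_apply_eq_of_mem_range hT3 hxT]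
  have hdim : (Module.finrank ℝ (range T) : ℝ) ≤
      Module.finrank ℝ ↥(range T ⊓ ker S) + Module.finrank ℝ (range S) := by
    exact_mod_cast T.finrank_range_le_finrank_inf_ker_add S
  have hfrob := (B' - A').finrank_le_sum_sq_of_norm_le_norm_toEuclideanLin _ hW
  rw [A'.rank_eq_finrank_range_toEuclideanLin, B'.rank_eq_finrank_range_toEuclideanLin,
    frobNorm, Real.sq_sqrt (by positivity)]
  linarith

end ListDecCov
end
end
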